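/- Let σ and μ be Borel probability measures on ℝ with supp(σ) ⊆ [-1,1], 0 < δ < 1, and suppose μ satisfies ∫ f dμ = ∫∫ f(δs + (1-δ)β) dμ(s) dσ(β) for all bounded continuous f. Then supp(μ) is contained in the 2δ-neighborhood of supp(σ), i.e. every point of supp(μ) is within distance 2δ of supp(σ). -/

import Mathlib

/-!
The invariance equation says that `μ` is the image of `σ ⊗ μ` under
`(β, s) ↦ δ s + (1 - δ) β`. For `|β| ≤ 1` this point lies outside `[-r, r]` only if
`|s| > 1 + (r - 1) / δ`; iterating, the tail `μ {|t| > r}` is bounded by tails at radii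
`1 + (r - 1) / δ ^ n → ∞`, so it vanishes for `r > 1` and `μ` lives on `[-1, 1]`. Then
`δ s + (1 - δ) β` is within `δ |s - β| ≤ 2δ` of `β ∈ supp σ`, so a point farther than `2δ`
from the compact set `supp σ` has a `μ`-null ball around it.
-/

open MeasureTheory Metric Set

/-- The topological support of a Borel measure on ℝ. -/
def msupport (ν : MeasureTheory.Measure ℝ) : Set ℝ :=
  {x | ∀ ε > 0, 0 < ν (Metric.ball x ε)}

open Filter Topology

lemma msupport_eq_support (ν : Measure ℝ) : msupport ν = ν.support := by
  ext x
  exact nhds_basis_ball.mem_measureSupport.symm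

lemma IsCompact.exists_pos_forall_add_le_dist {X : Type*} [PseudoMetricSpace X] {K : Set X}
    (hK : IsCompact K) (hne : K.Nonempty) {x : X} {c : ℝ} (h : ∀ y ∈ K, c < dist x y) :
    ∃ η > 0, ∀ y ∈ K, c + η ≤ dist x y := by
  obtain ⟨y₀, hy₀, hmin⟩ :=
    hK.exists_isMinOn hne (f := (dist x ·)) (continuous_const.dist continuous_id).continuousOn
  refine ⟨dist x y₀ - c, by linarith [h y₀ hy₀], fun y hy => ?_⟩
  linarith [isMinOn_iff.mp hmin y hy]

def mixMap (δ : ℝ) (p : ℝ × ℝ) : ℝ := δ * p.2 + (1 - δ) * p.1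

lemma continuous_mixMap (δ : ℝ) : Continuous (mixMap δ) := by
  unfold mixMap; fun_prop

lemma eq_map_mixMap_of_integral_eq {σ μ : Measure ℝ} [IsFiniteMeasure σ] [IsFiniteMeasure μ]
    {δ : ℝ} (hinv : ∀ f : BoundedContinuousFunction ℝ ℝ,
      ∫ x, f x ∂μ = ∫ β, ∫ s, f (δ * s + (1 - δ) * β) ∂μ ∂σ) :
    μ = (σ.prod μ).map (mixMap δ) := by
  refine ext_of_forall_integral_eq_of_IsFiniteMeasure fun f => ?_
  rw [hinv f, integral_map (continuous_mixMap δ).aemeasurable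
    f.continuous.aestronglyMeasurable, integral_prod]
  · rfl
  · exact (f.compContinuous ⟨_, continuous_mixMap δ⟩).integrable _

section Invariant

variable {σ μ : Measure ℝ} [IsProbabilityMeasure σ] {δ : ℝ}
  (hμ : μ = (σ.prod μ).map (mixMap δ))
include hμ

lemma measure_le_of_ae_mem_imp [SFinite μ] {A B : Set ℝ} (hA : MeasurableSet A)
    (h : ∀ᵐ p ∂σ.prod μ, mixMap δ p ∈ A → p.2 ∈ B) : μ A ≤ μ B :=
  calc μ A = (σ.prod μ) (mixMap δ ⁻¹' A) := by
        rw [← Measure.map_apply (continuous_mixMap δ).measurable hA, ← hμ]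
    _ ≤ (σ.prod μ) (univ ×ˢ B) := measure_mono_ae (h.mono fun p hp hA => ⟨trivial, hp hA⟩)
    _ = μ B := by rw [Measure.prod_prod, measure_univ, one_mul]

lemma measure_compl_closedBall_le [SFinite μ] (hσ1 : ∀ᵐ β ∂σ, |β| ≤ 1) (hδ0 : 0 < δ)
    (hδ1 : δ ≤ 1) (r : ℝ) : μ (closedBall 0 r)ᶜ ≤ μ (closedBall 0 (1 + (r - 1) / δ))ᶜ := by
  refine measure_le_of_ae_mem_imp hμ measurableSet_closedBall.compl ?_
  filter_upwards [Measure.quasiMeasurePreserving_fst.ae hσ1] with p hβ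
  contrapose!
  simp only [mem_compl_iff, not_not, mem_closedBall_zero_iff, Real.norm_eq_abs]
  intro hs
  calc |mixMap δ p| ≤ δ * |p.2| + (1 - δ) * |p.1| := by
        unfold mixMap
        simpa only [abs_mul, abs_of_pos hδ0, abs_of_nonneg (sub_nonneg.2 hδ1)]
          using abs_add_le (δ * p.2) ((1 - δ) * p.1)
    _ ≤ δ * (1 + (r - 1) / δ) + (1 - δ) * 1 := by gcongr
    _ = r := by field_simp; ring

lemma measure_compl_closedBall_le_pow [SFinite μ] (hσ1 : ∀ᵐ β ∂σ, |β| ≤ 1) (hδ0 : 0 < δ)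
    (hδ1 : δ ≤ 1) (r : ℝ) (n : ℕ) :
    μ (closedBall 0 r)ᶜ ≤ μ (closedBall 0 (1 + (r - 1) / δ ^ n))ᶜ := by
  induction n with
  | zero => simp
  | succ n ih =>
    refine ih.trans ((measure_compl_closedBall_le hμ hσ1 hδ0 hδ1 _).trans_eq ?_)
    rw [pow_succ, add_sub_cancel_left, div_div]

lemma ae_abs_le_of_one_lt [IsFiniteMeasure μ] (hσ1 : ∀ᵐ β ∂σ, |β| ≤ 1) (hδ0 : 0 < δ)
    (hδ1 : δ < 1) {r : ℝ} (hr : 1 < r) : ∀ᵐ s ∂μ, |s| ≤ r := by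
  have htail : Tendsto (fun R => μ (closedBall 0 R)ᶜ) atTop (𝓝 0) := by
    simpa using tendsto_measure_compl_closedBall_of_isTightMeasureSet
      (isTightMeasureSet_singleton (μ := μ)) 0
  have hradius : Tendsto (fun n : ℕ => 1 + (r - 1) / δ ^ n) atTop atTop := by
    refine tendsto_atTop_add_const_left _ _ ?_
    simp_rw [div_eq_mul_inv, ← inv_pow]
    exact (tendsto_pow_atTop_atTop_of_one_lt (one_lt_inv₀ hδ0 |>.2 hδ1)).const_mul_atTop
      (sub_pos.2 hr)
  have hnull : μ (closedBall 0 r)ᶜ = 0 := le_antisymm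
    (ge_of_tendsto' (htail.comp hradius)
      (measure_compl_closedBall_le_pow hμ hσ1 hδ0 hδ1.le r)) zero_le
  filter_upwards [mem_ae_iff.2 hnull] with s hs
  simpa using hs

lemma ae_abs_le_one [IsFiniteMeasure μ] (hσ1 : ∀ᵐ β ∂σ, |β| ≤ 1) (hδ0 : 0 < δ)
    (hδ1 : δ < 1) : ∀ᵐ s ∂μ, |s| ≤ 1 := by
  have hr (n : ℕ) : ∀ᵐ s ∂μ, |s| ≤ 1 + 1 / ((n : ℝ) + 1) :=
    ae_abs_le_of_one_lt hμ hσ1 hδ0 hδ1 (lt_add_of_pos_right _ Nat.one_div_pos_of_nat)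
  filter_upwards [ae_all_iff.2 hr] with s hs
  exact ge_of_tendsto'
    (by simpa using tendsto_one_div_add_atTop_nhds_zero_nat.const_add (1 : ℝ)) hs

lemma measure_ball_eq_zero_of_ae_le_dist [SFinite μ] (hδ0 : 0 ≤ δ) {x η : ℝ}
    (hμ1 : ∀ᵐ s ∂μ, |s| ≤ 1) (hσx : ∀ᵐ β ∂σ, |β| ≤ 1 ∧ 2 * δ + η ≤ dist x β) :
    μ (ball x η) = 0 := by
  refine nonpos_iff_eq_zero.1 <| (measure_le_of_ae_mem_imp hμ measurableSet_ball ?_).trans_eq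
    measure_empty
  filter_upwards [Measure.quasiMeasurePreserving_fst.ae hσx,
    Measure.quasiMeasurePreserving_snd.ae hμ1] with p ⟨hβ, hgap⟩ hs hmem
  have hstep : dist (mixMap δ p) p.1 ≤ 2 * δ := by
    rw [Real.dist_eq, show mixMap δ p - p.1 = δ * (p.2 - p.1) by unfold mixMap; ring, abs_mul,
      abs_of_nonneg hδ0]
    nlinarith [abs_sub p.2 p.1]
  rw [mem_ball, dist_comm] at hmem
  linarith [dist_triangle x (mixMap δ p) p.1]

end Invariant

theorem supp_mu_subset_neighborhood (σ μ : Measure ℝ)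
    [IsProbabilityMeasure σ] [IsProbabilityMeasure μ]
    (δ : ℝ) (hδ0 : 0 < δ) (hδ1 : δ < 1)
    (hσ : msupport σ ⊆ Set.Icc (-1 : ℝ) 1)
    (hinv : ∀ f : BoundedContinuousFunction ℝ ℝ,
      ∫ x, f x ∂μ = ∫ β, ∫ s, f (δ * s + (1 - δ) * β) ∂μ ∂σ) :
    ∀ x ∈ msupport μ, ∃ y ∈ msupport σ, dist x y ≤ 2 * δ := by
  intro x hx
  by_contra! hfar
  rw [msupport_eq_support] at hσ hfar
  have hμ := eq_map_mixMap_of_integral_eq hinv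
  obtain ⟨η, hη, hgap⟩ := (isCompact_Icc.of_isClosed_subset Measure.isClosed_support hσ)
    |>.exists_pos_forall_add_le_dist (Measure.nonempty_support (NeZero.ne σ)) hfar
  have hσx : ∀ᵐ β ∂σ, |β| ≤ 1 ∧ 2 * δ + η ≤ dist x β := by
    filter_upwards [Measure.support_mem_ae] with β hβ using ⟨abs_le.2 (hσ hβ), hgap β hβ⟩
  have hμ1 := ae_abs_le_one hμ (hσx.mono fun _ => And.left) hδ0 hδ1
  exact (hx η hη).ne' (measure_ball_eq_zero_of_ae_le_dist hμ hδ0.le hμ1 hσx)
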